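/- Let g : ℝ → ℝ and v : ℝ → ℝ^L satisfy perfect balancedness (1/2) g(t)² = ‖v(t)‖₂² for all t, together with the gradient flow equations g'(t) = 4 g(t) ⟨λ(t), v(t)⟩ and v'(t) = 2 g(t)² λ(t). Define x(t) = g(t)² v(t). Then whenever ‖x(t)‖₂ ≠ 0, d/dt ‖x(t)‖₂ = 6 · 2^{2/3} · ⟨λ(t), x(t)/‖x(t)‖₂⟩ · ‖x(t)‖₂^{4/3}. -/

import Mathlib

/-! Along the flow, `x = g² • v` has `⟪x, x'⟫ = 6 g⁶ ⟪λ, v⟫` once balancedness `‖v‖² = g²/2` is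
used, so `d‖x‖/dt = 6 g⁶ ⟪λ, v⟫ / ‖x‖`. Balancedness also gives `2 ‖x‖² = (g²)³`, whence
`2^{2/3} ‖x‖^{4/3} = g⁴`, which converts `g⁶ ⟪λ, v⟫ = g⁴ ⟪λ, x⟫` into the stated form. -/

open RealInnerProductSpace

section

variable {F : Type*} [NormedAddCommGroup F] [InnerProductSpace ℝ F]

theorem HasDerivAt.norm_of_ne_zero {f : ℝ → F} {f' : F} {t : ℝ} (hf : HasDerivAt f f' t)
    (h0 : f t ≠ 0) : HasDerivAt (fun s => ‖f s‖) (⟪f t, f'⟫ / ‖f t‖) t := by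
  have h := hf.norm_sq.sqrt (pow_ne_zero 2 (norm_ne_zero_iff.2 h0))
  simp only [Real.sqrt_sq (norm_nonneg _)] at h
  convert h using 1
  rw [mul_div_mul_left _ _ two_ne_zero]

theorem HasDerivAt.sq_smul {g : ℝ → ℝ} {v : ℝ → F} {g' : ℝ} {v' : F} {t : ℝ}
    (hg : HasDerivAt g g' t) (hv : HasDerivAt v v' t) :
    HasDerivAt (fun s => g s ^ 2 • v s) (g t ^ 2 • v' + (2 * g t * g') • v t) t := by
  convert (hg.fun_pow 2).fun_smul hv using 3
  norm_num

theorem inner_sq_smul_flow_deriv_of_balanced {g : ℝ} {v l : F} (hbal : (1 / 2) * g ^ 2 = ‖v‖ ^ 2) :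
    ⟪g ^ 2 • v, g ^ 2 • (2 * g ^ 2) • l + (2 * g * (4 * g * ⟪l, v⟫)) • v⟫ = 6 * g ^ 6 * ⟪l, v⟫ := by
  simp only [inner_add_right, real_inner_smul_left, real_inner_smul_right,
    real_inner_self_eq_norm_sq, ← hbal, real_inner_comm l v]
  ring

theorem two_mul_norm_sq_smul_of_balanced {g : ℝ} {v : F} (hbal : (1 / 2) * g ^ 2 = ‖v‖ ^ 2) :
    2 * ‖g ^ 2 • v‖ ^ 2 = (g ^ 2) ^ 3 := by
  rw [norm_smul, mul_pow, ← hbal, Real.norm_of_nonneg (sq_nonneg g)]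
  ring

end

theorem two_rpow_mul_rpow_four_thirds {r a : ℝ} (hr : 0 ≤ r) (ha : 0 ≤ a)
    (h : 2 * r ^ 2 = a ^ 3) : (2 : ℝ) ^ ((2 : ℝ) / 3) * r ^ ((4 : ℝ) / 3) = a ^ 2 := by
  have hr43 : r ^ ((4 : ℝ) / 3) = (r ^ 2) ^ ((2 : ℝ) / 3) := by
    rw [← Real.rpow_natCast, ← Real.rpow_mul hr]
    norm_num
  rw [hr43, ← Real.mul_rpow zero_le_two (sq_nonneg r), h, ← Real.rpow_natCast,
    ← Real.rpow_mul ha]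
  norm_num

theorem stmt6_general (L : ℕ) (g : ℝ → ℝ) (v l : ℝ → EuclideanSpace ℝ (Fin L))
    (hbal : ∀ t, (1/2) * (g t)^2 = ‖v t‖^2)
    (hg : ∀ t, HasDerivAt g (4 * g t * (inner ℝ (l t) (v t) : ℝ)) t)
    (hv : ∀ t, HasDerivAt v ((2 * (g t)^2) • l t) t)
    (x : ℝ → EuclideanSpace ℝ (Fin L)) (hx : ∀ t, x t = (g t)^2 • v t) :
    ∀ t : ℝ, ‖x t‖ ≠ 0 →
      deriv (fun s => ‖x s‖) t
        = 6 * (2:ℝ) ^ ((2:ℝ)/3) * (inner ℝ (l t) ((‖x t‖)⁻¹ • x t) : ℝ)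
            * ‖x t‖ ^ ((4:ℝ)/3) := by
  intro t ht
  obtain rfl : x = fun s => g s ^ 2 • v s := funext hx
  have hnorm := ((hg t).sq_smul (hv t)).norm_of_ne_zero (norm_ne_zero_iff.1 ht)
  have hpow := two_rpow_mul_rpow_four_thirds (norm_nonneg _) (sq_nonneg _)
    (two_mul_norm_sq_smul_of_balanced (hbal t))
  rw [hnorm.deriv, inner_sq_smul_flow_deriv_of_balanced (hbal t), real_inner_smul_right, real_inner_smul_right]
  calc 6 * g t ^ 6 * ⟪l t, v t⟫ / ‖g t ^ 2 • v t‖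
      = 6 * (‖g t ^ 2 • v t‖⁻¹ * (g t ^ 2 * ⟪l t, v t⟫)) * (g t ^ 2) ^ 2 := by ring
    _ = _ := by rw [← hpow]; ring

theorem stmt6 (L : ℕ) (g : ℝ → ℝ) (v l : ℝ → EuclideanSpace ℝ (Fin L))
    (hl : Continuous l)
    (hbal : ∀ t, (1/2) * (g t)^2 = ‖v t‖^2)
    (hg : ∀ t, HasDerivAt g (4 * g t * (inner ℝ (l t) (v t) : ℝ)) t)
    (hv : ∀ t, HasDerivAt v ((2 * (g t)^2) • l t) t)
    (x : ℝ → EuclideanSpace ℝ (Fin L)) (hx : ∀ t, x t = (g t)^2 • v t) :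
    ∀ t : ℝ, ‖x t‖ ≠ 0 →
      deriv (fun s => ‖x s‖) t
        = 6 * (2:ℝ) ^ ((2:ℝ)/3) * (inner ℝ (l t) ((‖x t‖)⁻¹ • x t) : ℝ)
            * ‖x t‖ ^ ((4:ℝ)/3) :=
  stmt6_general L g v l hbal hg hv x hx
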